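/- Let α ∈ (0,1), β = 1−α, f > 0, r ∈ [0,1], ρ ∈ [0,1], v > 0, R_t > 0, with αβρ < 1. Let (X_i)_{i≥1} be i.i.d. with P(X_i = 1) = α, P(X_i = 0) = β, define K_i = 1 if (X_i, X_{i+1}) = (0,1) and K_i = 0 otherwise, and let (Y_i)_{i≥1} be i.i.d. exponential random variables with rate f, independent of (X_i). For m ≥ 2 define u_m = [ Σ_{i=1}^{m−1} ( α v Y_i R_t − (1−r) ρ v K_i Y_i R_t ) ] / [ Σ_{i=1}^{m−1} ( v Y_i R_t − ρ v K_i Y_i R_t ) ]. Then u_m converges almost surely to (α − (1−r) α β ρ) / (1 − α β ρ) as m → ∞. -/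

import Mathlib

/-!
Put `ξ i = X (i + 1)` and `η i = Y (i + 1)`. Up to the common factor `m - 1`, numerator and
denominator of `u m` are fixed linear combinations of the running averages of `η i` and of
`W i = K (i + 1) * η i` (`honestSelfishInterval`). The `η i` are i.i.d. with mean `1 / f`, so the
strong law gives the first average. The `W i` are identically distributed with mean `β α / f` but
only `1`-dependent: `W i` and `W j` are independent once `i + 2 ≤ j`. Hence the even-indexed and
the odd-indexed terms are each pairwise independent, Etemadi's strong law applies to both halves,
and the two half-averages recombine. The limit of `u m` is the ratio of the limiting averages.
-/

open MeasureTheory ProbabilityTheory Finset Filter Topology Real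

namespace Finset

lemma sum_range_eq_sum_even_add_sum_odd {M : Type*} [AddCommMonoid M] (w : ℕ → M) (n : ℕ) :
    ∑ i ∈ range n, w i
      = ∑ j ∈ range ((n + 1) / 2), w (2 * j) + ∑ j ∈ range (n / 2), w (2 * j + 1) := by
  induction n with
  | zero => simp
  | succ n ih =>
    rw [sum_range_succ, ih]
    obtain ⟨k, rfl | rfl⟩ := Nat.even_or_odd' n
    · rw [show (2 * k + 1 + 1) / 2 = k + 1 by omega, show (2 * k + 1) / 2 = k by omega,
        show 2 * k / 2 = k by omega, sum_range_succ]
      abel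
    · rw [show (2 * k + 1 + 1 + 1) / 2 = k + 1 by omega, show (2 * k + 1 + 1) / 2 = k + 1 by omega,
        show (2 * k + 1) / 2 = k by omega, sum_range_succ fun j => w (2 * j + 1)]
      abel

lemma sum_Icc_one_eq_sum_range {M : Type*} [AddCommMonoid M] (g : ℕ → M) (n : ℕ) :
    ∑ i ∈ Icc 1 n, g i = ∑ i ∈ range n, g (i + 1) := by
  rw [← Ico_add_one_right_eq_Icc, sum_Ico_eq_sum_range, Nat.add_sub_cancel]
  simp_rw [add_comm 1]

end Finset

lemma tendsto_natCast_add_div_two_div_natCast (c : ℕ) :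
    Tendsto (fun n : ℕ => (((n + c) / 2 : ℕ) : ℝ) / n) atTop (𝓝 2⁻¹) := by
  have h : ∀ d : ℝ, Tendsto (fun n : ℕ => 2⁻¹ + d / n) atTop (𝓝 2⁻¹) := fun d => by
    simpa using tendsto_const_nhds.add (tendsto_const_div_atTop_nhds_zero_nat d)
  refine tendsto_of_tendsto_of_tendsto_of_le_of_le' (h ((c - 1) / 2)) (h (c / 2)) ?_ ?_ <;>
    filter_upwards [eventually_gt_atTop 0] with n hn <;>
    rw [show (2⁻¹ : ℝ) = (n / 2) / n by field_simp, ← add_div] <;>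
    gcongr
  · have : n + c ≤ 2 * ((n + c) / 2) + 1 := by omega
    have : ((n + c : ℕ) : ℝ) ≤ 2 * ((n + c) / 2 : ℕ) + 1 := by exact_mod_cast this
    push_cast at this
    linarith
  · have : 2 * ((n + c) / 2) ≤ n + c := by omega
    have : (2 * ((n + c) / 2 : ℕ) : ℝ) ≤ ((n + c : ℕ) : ℝ) := by exact_mod_cast this
    push_cast at this
    linarith

lemma Filter.Tendsto.average_of_even_odd {w : ℕ → ℝ} {L : ℝ}
    (heven : Tendsto (fun n : ℕ => (∑ i ∈ range n, w (2 * i)) / n) atTop (𝓝 L))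
    (hodd : Tendsto (fun n : ℕ => (∑ i ∈ range n, w (2 * i + 1)) / n) atTop (𝓝 L)) :
    Tendsto (fun n : ℕ => (∑ i ∈ range n, w i) / n) atTop (𝓝 L) := by
  have hk (c : ℕ) : Tendsto (fun n : ℕ => (n + c) / 2) atTop atTop :=
    (Nat.tendsto_div_const_atTop two_ne_zero).comp (tendsto_add_atTop_nat c)
  have h := ((heven.comp (hk 1)).mul (tendsto_natCast_add_div_two_div_natCast 1)).add
    ((hodd.comp (hk 0)).mul (tendsto_natCast_add_div_two_div_natCast 0))
  rw [show L * 2⁻¹ + L * 2⁻¹ = L by ring] at h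
  refine h.congr' ?_
  filter_upwards [eventually_ge_atTop 2] with n hn
  have h1 : (((n + 1) / 2 : ℕ) : ℝ) ≠ 0 := by norm_cast; omega
  have h0 : ((n / 2 : ℕ) : ℝ) ≠ 0 := by norm_cast; omega
  simp only [Function.comp_apply, add_zero, sum_range_eq_sum_even_add_sum_odd w n]
  field_simp

lemma Filter.Tendsto.average_const_mul_sub {x y : ℕ → ℝ} {A B : ℝ}
    (hx : Tendsto (fun n : ℕ => (∑ i ∈ range n, x i) / n) atTop (𝓝 A))
    (hy : Tendsto (fun n : ℕ => (∑ i ∈ range n, y i) / n) atTop (𝓝 B)) (c d : ℝ) :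
    Tendsto (fun n : ℕ => (∑ i ∈ range n, (c * x i - d * y i)) / n) atTop (𝓝 (c * A - d * B)) := by
  simp_rw [sum_sub_distrib, ← mul_sum, sub_div, mul_div_assoc]
  exact (hx.const_mul c).sub (hy.const_mul d)

lemma Filter.Tendsto.div_of_average {p q : ℕ → ℝ} {a b : ℝ}
    (hp : Tendsto (fun n : ℕ => p n / n) atTop (𝓝 a))
    (hq : Tendsto (fun n : ℕ => q n / n) atTop (𝓝 b)) (hb : b ≠ 0) :
    Tendsto (fun n => p n / q n) atTop (𝓝 (a / b)) := by
  refine (hp.div hq hb).congr' ?_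
  filter_upwards [eventually_gt_atTop 0] with n hn
  exact div_div_div_cancel_right₀ (by positivity) _ _

namespace ProbabilityTheory

lemma exponentialPDFReal_mul_self_eq_indicator (r : ℝ) :
    (fun x => exponentialPDFReal r x * x)
      = (Set.Ioi 0).indicator fun x => r * (x * exp (-(r * x))) := by
  ext x
  rcases lt_trichotomy x 0 with hx | rfl | hx
  · simp [exponentialPDFReal, gammaPDFReal, hx.not_ge, hx.not_gt]
  · simp
  · rw [Set.indicator_of_mem (Set.mem_Ioi.mpr hx)]
    simp only [exponentialPDFReal, gammaPDFReal, if_pos hx.le, Gamma_one, rpow_one, sub_self,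
      rpow_zero, div_one, mul_one]
    ring

lemma integrable_exponentialPDFReal_mul_self {r : ℝ} (hr : 0 < r) :
    Integrable fun x => exponentialPDFReal r x * x := by
  have h := integrableOn_rpow_mul_exp_neg_mul_rpow (p := 1) (s := 1) (by norm_num) one_pos hr
  simp only [rpow_one, neg_mul] at h
  rw [exponentialPDFReal_mul_self_eq_indicator, integrable_indicator_iff measurableSet_Ioi]
  exact h.const_mul r

lemma integral_exponentialPDFReal_mul_self {r : ℝ} (hr : 0 < r) :
    ∫ x, exponentialPDFReal r x * x = r⁻¹ := by
  have h := integral_rpow_mul_exp_neg_mul_Ioi two_pos hr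
  norm_num [Gamma_two] at h
  rw [exponentialPDFReal_mul_self_eq_indicator, integral_indicator measurableSet_Ioi,
    integral_const_mul, h]
  field_simp

lemma toReal_exponentialPDF {r : ℝ} (hr : 0 < r) (x : ℝ) :
    (exponentialPDF r x).toReal = exponentialPDFReal r x :=
  ENNReal.toReal_ofReal (exponentialPDFReal_nonneg hr x)

lemma expMeasure_eq_withDensity (r : ℝ) :
    expMeasure r = volume.withDensity (exponentialPDF r) :=
  rfl

lemma measurable_exponentialPDF (r : ℝ) : Measurable (exponentialPDF r) :=
  (measurable_exponentialPDFReal r).ennreal_ofReal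

lemma integrable_id_expMeasure {r : ℝ} (hr : 0 < r) : Integrable id (expMeasure r) := by
  rw [expMeasure_eq_withDensity, integrable_withDensity_iff_integrable_smul'
    (measurable_exponentialPDF r) (.of_forall fun _ => ENNReal.ofReal_lt_top)]
  simpa [toReal_exponentialPDF hr] using integrable_exponentialPDFReal_mul_self hr

lemma integral_id_expMeasure {r : ℝ} (hr : 0 < r) : ∫ x, x ∂expMeasure r = r⁻¹ := by
  rw [expMeasure_eq_withDensity, integral_withDensity_eq_integral_toReal_smul
    (measurable_exponentialPDF r) (.of_forall fun _ => ENNReal.ofReal_lt_top)]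
  simpa [toReal_exponentialPDF hr] using integral_exponentialPDFReal_mul_self hr

lemma identDistrib_indicator_one {Ω Ω' : Type*} [MeasurableSpace Ω] [MeasurableSpace Ω']
    {μ : Measure Ω} {ν : Measure Ω'} [IsProbabilityMeasure μ] [IsProbabilityMeasure ν]
    {s : Set Ω} {t : Set Ω'} (hs : MeasurableSet s) (ht : MeasurableSet t) (hst : μ s = ν t) :
    IdentDistrib (s.indicator (1 : Ω → ℝ)) (t.indicator 1) μ ν where
  aemeasurable_fst := (measurable_one.indicator hs).aemeasurable
  aemeasurable_snd := (measurable_one.indicator ht).aemeasurable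
  map_eq := by
    classical
    ext u hu
    rw [Measure.map_apply (measurable_one.indicator hs) hu,
      Measure.map_apply (measurable_one.indicator ht) hu]
    simp only [Pi.one_def, Set.indicator_const_preimage_eq_union]
    split_ifs <;> simp [prob_compl_eq_one_sub, hs, ht, hst]

theorem strong_law_ae_real_of_indepFun_of_add_two_le {Ω : Type*} {m : MeasurableSpace Ω}
    {μ : Measure Ω} (X : ℕ → Ω → ℝ) (hint : Integrable (X 0) μ)
    (hindep : ∀ i j, i + 2 ≤ j → X i ⟂ᵢ[μ] X j)
    (hident : ∀ i, IdentDistrib (X i) (X 0) μ μ) :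
    ∀ᵐ ω ∂μ, Tendsto (fun n : ℕ => (∑ i ∈ range n, X i ω) / n) atTop (𝓝 μ[X 0]) := by
  have hsub (c : ℕ) : ∀ᵐ ω ∂μ,
      Tendsto (fun n : ℕ => (∑ i ∈ range n, X (2 * i + c) ω) / n) atTop (𝓝 μ[X 0]) := by
    have hpair : Pairwise (Function.onFun (· ⟂ᵢ[μ] ·) fun i => X (2 * i + c)) := by
      intro i j hij
      rcases hij.lt_or_gt with h | h
      · exact hindep _ _ (by omega)
      · exact (hindep _ _ (by omega)).symm
    have h := strong_law_ae_real (fun i => X (2 * i + c))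
      ((hident (2 * 0 + c)).integrable_iff.mpr hint) hpair
      fun i => (hident (2 * i + c)).trans (hident (2 * 0 + c)).symm
    rwa [(hident (2 * 0 + c)).integral_eq] at h
  filter_upwards [hsub 0, hsub 1] with ω heven hodd
  exact Tendsto.average_of_even_odd (w := fun i => X i ω) heven hodd

lemma HasLaw.integrable {Ω : Type*} [MeasurableSpace Ω] {P : Measure Ω} {X : Ω → ℝ}
    {ν : Measure ℝ} (hX : HasLaw X ν P) (hν : Integrable id ν) : Integrable X P :=
  (hX.identDistrib HasLaw.id).integrable_iff.mpr hν

theorem strong_law_ae_real_of_hasLaw {Ω : Type*} [MeasurableSpace Ω] {P : Measure Ω}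
    {X : ℕ → Ω → ℝ} {ν : Measure ℝ}
    (hindep : Pairwise (Function.onFun (· ⟂ᵢ[P] ·) X)) (hlaw : ∀ i, HasLaw (X i) ν P)
    (hν : Integrable id ν) :
    ∀ᵐ ω ∂P, Tendsto (fun n : ℕ => (∑ i ∈ range n, X i ω) / n) atTop (𝓝 (∫ x, x ∂ν)) := by
  have h := strong_law_ae_real X ((hlaw 0).integrable hν) hindep
    fun i => (hlaw i).identDistrib (hlaw 0)
  rwa [(hlaw 0).integral_eq] at h

variable {Ω : Type*} {ξ η : ℕ → Ω → ℝ}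

noncomputable def honestSelfishTriple (ξ η : ℕ → Ω → ℝ) (a : ℕ) (ω : Ω) : ℝ × ℝ × ℝ :=
  ((ξ a ⁻¹' {0}).indicator 1 ω, (ξ (a + 1) ⁻¹' {1}).indicator 1 ω, η a ω)

noncomputable def honestSelfishInterval (ξ η : ℕ → Ω → ℝ) (a : ℕ) (ω : Ω) : ℝ :=
  (ξ a ⁻¹' {0}).indicator 1 ω * ((ξ (a + 1) ⁻¹' {1}).indicator 1 ω * η a ω)

variable [MeasurableSpace Ω] {P : Measure Ω}

lemma indepFun_honestSelfishTriple (hind : iIndepFun (Sum.elim ξ η) P)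
    (hξ : ∀ i, Measurable (ξ i)) (hη : ∀ i, Measurable (η i)) {a b : ℕ} (hab : a + 2 ≤ b) :
    honestSelfishTriple ξ η a ⟂ᵢ[P] honestSelfishTriple ξ η b := by
  let S (c : ℕ) : Finset (ℕ ⊕ ℕ) := {.inl c, .inl (c + 1), .inr c}
  have hdisj : Disjoint (S a) (S b) := by
    simp [S]
    omega
  let e (c : ℕ) (x : S c → ℝ) : ℝ × ℝ × ℝ :=
    (({0} : Set ℝ).indicator 1 (x ⟨.inl c, by simp [S]⟩),
      ({1} : Set ℝ).indicator 1 (x ⟨.inl (c + 1), by simp [S]⟩), x ⟨.inr c, by simp [S]⟩)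
  have he (c : ℕ) : Measurable (e c) := by
    refine .prodMk ?_ (.prodMk ?_ (measurable_pi_apply _)) <;>
      exact (measurable_one.indicator (measurableSet_singleton _)).comp (measurable_pi_apply _)
  exact (hind.indepFun_finset (S a) (S b) hdisj fun k => k.rec hξ hη).comp (he a) (he b)

lemma indepFun_indicator_zero_prodMk (hind : iIndepFun (Sum.elim ξ η) P)
    (hξ : ∀ i, Measurable (ξ i)) (hη : ∀ i, Measurable (η i)) (a : ℕ) :
    (ξ a ⁻¹' {0}).indicator (1 : Ω → ℝ) ⟂ᵢ[P]
      fun ω => ((ξ (a + 1) ⁻¹' {1}).indicator (1 : Ω → ℝ) ω, η a ω) :=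
  (hind.indepFun_prodMk (fun k => k.rec hξ hη) (.inl (a + 1)) (.inr a) (.inl a) (by simp)
    (by simp)).symm.comp (measurable_one.indicator (measurableSet_singleton 0))
    ((measurable_one.indicator (measurableSet_singleton 1)).prodMap measurable_id)

lemma indepFun_indicator_one (hind : iIndepFun (Sum.elim ξ η) P) (a : ℕ) :
    (ξ (a + 1) ⁻¹' {1}).indicator (1 : Ω → ℝ) ⟂ᵢ[P] η a :=
  (hind.indepFun (i := .inl (a + 1)) (j := .inr a) (by simp)).comp
    (measurable_one.indicator (measurableSet_singleton 1)) measurable_id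

lemma identDistrib_honestSelfishTriple [IsProbabilityMeasure P]
    (hind : iIndepFun (Sum.elim ξ η) P) (hξ : ∀ i, Measurable (ξ i)) (hη : ∀ i, Measurable (η i))
    {p₀ p₁ : ENNReal} (h₀ : ∀ i, P (ξ i ⁻¹' {0}) = p₀) (h₁ : ∀ i, P (ξ i ⁻¹' {1}) = p₁)
    {ν : Measure ℝ} (hlaw : ∀ i, HasLaw (η i) ν P) (a b : ℕ) :
    IdentDistrib (honestSelfishTriple ξ η a) (honestSelfishTriple ξ η b) P P := by
  have hid₀ := identDistrib_indicator_one (hξ a (measurableSet_singleton 0))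
    (hξ b (measurableSet_singleton 0)) (by rw [h₀, h₀])
  have hid₁ := identDistrib_indicator_one (hξ (a + 1) (measurableSet_singleton 1))
    (hξ (b + 1) (measurableSet_singleton 1)) (by rw [h₁, h₁])
  exact hid₀.prodMk (hid₁.prodMk ((hlaw a).identDistrib (hlaw b))
      (indepFun_indicator_one hind a) (indepFun_indicator_one hind b))
    (indepFun_indicator_zero_prodMk hind hξ hη a) (indepFun_indicator_zero_prodMk hind hξ hη b)

lemma indepFun_indicator_zero_mul (hind : iIndepFun (Sum.elim ξ η) P)
    (hξ : ∀ i, Measurable (ξ i)) (hη : ∀ i, Measurable (η i)) (a : ℕ) :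
    (ξ a ⁻¹' {0}).indicator (1 : Ω → ℝ) ⟂ᵢ[P]
      fun ω => (ξ (a + 1) ⁻¹' {1}).indicator (1 : Ω → ℝ) ω * η a ω :=
  (indepFun_indicator_zero_prodMk hind hξ hη a).comp measurable_id
    (measurable_fst.mul measurable_snd)

lemma integrable_honestSelfishInterval [IsFiniteMeasure P] (hind : iIndepFun (Sum.elim ξ η) P)
    (hξ : ∀ i, Measurable (ξ i)) (hη : ∀ i, Measurable (η i)) {a : ℕ} (hint : Integrable (η a) P) :
    Integrable (honestSelfishInterval ξ η a) P :=
  (indepFun_indicator_zero_mul hind hξ hη a).integrable_mul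
    ((integrable_const 1).indicator (hξ a (measurableSet_singleton 0)))
    ((indepFun_indicator_one hind a).integrable_mul
      ((integrable_const 1).indicator (hξ (a + 1) (measurableSet_singleton 1))) hint)

lemma integral_honestSelfishInterval (hind : iIndepFun (Sum.elim ξ η) P)
    (hξ : ∀ i, Measurable (ξ i)) (hη : ∀ i, Measurable (η i)) (a : ℕ) :
    P[honestSelfishInterval ξ η a]
      = P.real (ξ a ⁻¹' {0}) * (P.real (ξ (a + 1) ⁻¹' {1}) * P[η a]) := by
  have hs₀ := hξ a (measurableSet_singleton 0)
  have hs₁ := hξ (a + 1) (measurableSet_singleton 1)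
  unfold honestSelfishInterval
  rw [(indepFun_indicator_zero_mul hind hξ hη a).integral_fun_mul_eq_mul_integral
      (measurable_one.indicator hs₀).aestronglyMeasurable
      ((measurable_one.indicator hs₁).mul (hη a)).aestronglyMeasurable,
    (indepFun_indicator_one hind a).integral_fun_mul_eq_mul_integral
      (measurable_one.indicator hs₁).aestronglyMeasurable (hη a).aestronglyMeasurable,
    integral_indicator_one hs₀, integral_indicator_one hs₁]

theorem ae_tendsto_average_honestSelfishInterval [IsProbabilityMeasure P]
    (hind : iIndepFun (Sum.elim ξ η) P) (hξ : ∀ i, Measurable (ξ i)) (hη : ∀ i, Measurable (η i))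
    {p₀ p₁ : ENNReal} (h₀ : ∀ i, P (ξ i ⁻¹' {0}) = p₀) (h₁ : ∀ i, P (ξ i ⁻¹' {1}) = p₁)
    {ν : Measure ℝ} (hlaw : ∀ i, HasLaw (η i) ν P) (hν : Integrable id ν) :
    ∀ᵐ ω ∂P, Tendsto (fun n : ℕ => (∑ i ∈ range n, honestSelfishInterval ξ η i ω) / n) atTop
      (𝓝 (p₀.toReal * (p₁.toReal * ∫ x, x ∂ν))) := by
  have hg : Measurable fun p : ℝ × ℝ × ℝ => p.1 * (p.2.1 * p.2.2) := by fun_prop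
  have h := strong_law_ae_real_of_indepFun_of_add_two_le (honestSelfishInterval ξ η)
    (integrable_honestSelfishInterval hind hξ hη ((hlaw 0).integrable hν))
    (fun i j hij => (indepFun_honestSelfishTriple hind hξ hη hij).comp hg hg)
    (fun i => (identDistrib_honestSelfishTriple hind hξ hη h₀ h₁ hlaw i 0).comp hg)
  rwa [integral_honestSelfishInterval hind hξ hη, measureReal_def, measureReal_def, h₀, h₁,
    (hlaw 0).integral_eq] at h

end ProbabilityTheory

theorem stmt6_general {Ω : Type*} [MeasurableSpace Ω] (P : Measure Ω) [IsProbabilityMeasure P]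
    (α β f r ρ v Rt : ℝ) (hα0 : 0 < α) (hα1 : α < 1) (hβ : β = 1 - α) (hf : 0 < f)
    (hv : 0 < v) (hRt : 0 < Rt) (hαβρ : α * β * ρ < 1)
    (X Y : ℕ → Ω → ℝ) (hXmeas : ∀ i, Measurable (X i)) (hYmeas : ∀ i, Measurable (Y i))
    (hindep : iIndepFun
      (Sum.elim (fun i : ℕ => X (i + 1)) (fun i : ℕ => Y (i + 1))) P)
    (h1 : ∀ i, 1 ≤ i → P {ω | X i ω = 1} = ENNReal.ofReal α)
    (h0 : ∀ i, 1 ≤ i → P {ω | X i ω = 0} = ENNReal.ofReal β)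
    (hY : ∀ i, 1 ≤ i → P.map (Y i) = expMeasure f)
    (K : ℕ → Ω → ℝ)
    (hK : ∀ i ω, K i ω = if X i ω = 0 ∧ X (i + 1) ω = 1 then (1 : ℝ) else 0)
    (u : ℕ → Ω → ℝ)
    (hu : ∀ m ω, u m ω =
      (∑ i ∈ Finset.Icc 1 (m - 1),
        (α * v * Y i ω * Rt - (1 - r) * ρ * v * K i ω * Y i ω * Rt)) /
      (∑ i ∈ Finset.Icc 1 (m - 1), (v * Y i ω * Rt - ρ * v * K i ω * Y i ω * Rt))) :
    ∀ᵐ ω ∂P, Tendsto (fun m : ℕ => u m ω) atTop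
      (nhds ((α - (1 - r) * α * β * ρ) / (1 - α * β * ρ))) := by
  set ξ : ℕ → Ω → ℝ := fun i => X (i + 1)
  set η : ℕ → Ω → ℝ := fun i => Y (i + 1)
  have hβ0 : 0 ≤ β := by linarith
  have hlaw (i : ℕ) : HasLaw (η i) (expMeasure f) P := ⟨(hYmeas _).aemeasurable, hY _ i.succ_pos⟩
  have hηavg := strong_law_ae_real_of_hasLaw (X := η)
    (fun i j hij => hindep.indepFun (i := .inr i) (j := .inr j) (by simpa using hij))
    hlaw (integrable_id_expMeasure hf)
  have hWavg := ae_tendsto_average_honestSelfishInterval hindep (fun i => hXmeas _)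
    (fun i => hYmeas _) (fun i => h0 _ i.succ_pos) (fun i => h1 _ i.succ_pos) hlaw
    (integrable_id_expMeasure hf)
  rw [integral_id_expMeasure hf] at hηavg hWavg
  rw [ENNReal.toReal_ofReal hβ0, ENNReal.toReal_ofReal hα0.le] at hWavg
  filter_upwards [hηavg, hWavg] with ω hη' hW'
  have hKY (i : ℕ) : K (i + 1) ω * Y (i + 1) ω = honestSelfishInterval ξ η i ω := by
    by_cases h₀ : X (i + 1) ω = 0 <;> by_cases h₁ : X (i + 1 + 1) ω = 1 <;>
      simp [honestSelfishInterval, hK, h₀, h₁, ξ, η]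
  have hsummand (c d : ℝ) (i : ℕ) : c * Y (i + 1) ω * Rt - d * K (i + 1) ω * Y (i + 1) ω * Rt
      = c * Rt * η i ω - d * Rt * honestSelfishInterval ξ η i ω := by
    rw [mul_assoc d, hKY]
    ring
  have hden : v * Rt * f⁻¹ - ρ * v * Rt * (β * (α * f⁻¹)) ≠ 0 := by
    rw [show v * Rt * f⁻¹ - ρ * v * Rt * (β * (α * f⁻¹)) = v * Rt * f⁻¹ * (1 - α * β * ρ) by ring]
    exact (mul_pos (by positivity) (by linarith)).ne'
  have hlim := ((hη'.average_const_mul_sub hW' (α * v * Rt) ((1 - r) * ρ * v * Rt)).div_of_average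
    (hη'.average_const_mul_sub hW' (v * Rt) (ρ * v * Rt)) hden).comp (tendsto_sub_atTop_nat 1)
  rw [show (α * v * Rt * f⁻¹ - (1 - r) * ρ * v * Rt * (β * (α * f⁻¹))) /
      (v * Rt * f⁻¹ - ρ * v * Rt * (β * (α * f⁻¹))) = (α - (1 - r) * α * β * ρ) / (1 - α * β * ρ) by
    rw [div_eq_div_iff hden (by linarith)]; ring] at hlim
  refine hlim.congr fun m => ?_
  simp only [Function.comp_apply, hu, sum_Icc_one_eq_sum_range, hsummand]

/-- Lemma 4 of the paper (longest chain extension attack): with i.i.d. key-block indicators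
`(X i)_{i ≥ 1}` (`P(X i = 1) = α`, `P(X i = 0) = β = 1-α`), pair indicators
`K i = 1_{(X i, X (i+1)) = (0,1)}`, and i.i.d. exponential inter-block times `(Y i)_{i ≥ 1}`
of rate `f` independent of the `X`'s, the selfish miner's relative revenue
`u_m = Σ(αvY_iR_t - (1-r)ρvK_iY_iR_t) / Σ(vY_iR_t - ρvK_iY_iR_t)` converges a.s. to
`(α - (1-r)αβρ)/(1 - αβρ)`. -/
theorem stmt6 {Ω : Type*} [MeasurableSpace Ω] (P : Measure Ω) [IsProbabilityMeasure P]
    (α β f r ρ v Rt : ℝ) (hα0 : 0 < α) (hα1 : α < 1) (hβ : β = 1 - α) (hf : 0 < f)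
    (hr0 : 0 ≤ r) (hr1 : r ≤ 1) (hρ0 : 0 ≤ ρ) (hρ1 : ρ ≤ 1)
    (hv : 0 < v) (hRt : 0 < Rt) (hαβρ : α * β * ρ < 1)
    (X Y : ℕ → Ω → ℝ) (hXmeas : ∀ i, Measurable (X i)) (hYmeas : ∀ i, Measurable (Y i))
    (hindep : iIndepFun
      (Sum.elim (fun i : ℕ => X (i + 1)) (fun i : ℕ => Y (i + 1))) P)
    (h1 : ∀ i, 1 ≤ i → P {ω | X i ω = 1} = ENNReal.ofReal α)
    (h0 : ∀ i, 1 ≤ i → P {ω | X i ω = 0} = ENNReal.ofReal β)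
    (hY : ∀ i, 1 ≤ i → P.map (Y i) = expMeasure f)
    (K : ℕ → Ω → ℝ)
    (hK : ∀ i ω, K i ω = if X i ω = 0 ∧ X (i + 1) ω = 1 then (1 : ℝ) else 0)
    (u : ℕ → Ω → ℝ)
    (hu : ∀ m ω, u m ω =
      (∑ i ∈ Finset.Icc 1 (m - 1),
        (α * v * Y i ω * Rt - (1 - r) * ρ * v * K i ω * Y i ω * Rt)) /
      (∑ i ∈ Finset.Icc 1 (m - 1), (v * Y i ω * Rt - ρ * v * K i ω * Y i ω * Rt))) :
    ∀ᵐ ω ∂P, Tendsto (fun m : ℕ => u m ω) atTop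
      (nhds ((α - (1 - r) * α * β * ρ) / (1 - α * β * ρ))) :=
  stmt6_general P α β f r ρ v Rt hα0 hα1 hβ hf hv hRt hαβρ X Y hXmeas hYmeas hindep h1 h0 hY K hK u
    hu
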